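/- Let ρ₀(x) = min(x, 1-x) on I = (0,1), and let v ∈ C^6(I) ∩ C([0,1]). Define E = ∫_I ρ₀²(v² + vₓ²) dx + Σ_{k=2}^{6} ∫_I ρ₀^k (∂ₓ^k v)² dx. Then there is an absolute constant C with ‖v‖²_{H³(I)} ≤ C·E. -/

import Mathlib

/-!
Put `q = x (1 - x)` and `φ = q ^ (n + 1) (1 - 2x)`. Since `φ` vanishes at both endpoints,
`∫₀¹ (φ w²)' = 0`. Because `φ' = (n + 1) q ^ n (1 - 2x)² - 2 q ^ (n + 1)` and
`(1 - 2x)² = 1 - 4q`, the leading part of `(φ w²)'` is `q ^ n w²`, and AM-GM absorbs the rest into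
`q ^ (n + 2) (w² + w'²)`: this is the weighted Hardy inequality
`∫ q ^ n w² ≤ 72 ∫ q ^ (n + 2) (w² + w'²)`. As `q ≤ ρ₀ ≤ 2q`, it also holds for the weight `ρ₀`,
with a factor `2 ^ n`. Applying it to `w = ∂ₓᵏ v` trades two powers of the weight for one
derivative. Since `ρ₀ ≤ 1`, at most three such steps reduce each `∫ (∂ₓᵏ v)²` with `k ≤ 3` to
terms of the energy.
-/

open Set MeasureTheory Topology

-- With `q = x (1 - x)`, `t = 1 - 2x`, `a = w x`, `b = w' x`, the first summand on the right is
-- `2 (φ w²)'` for `φ = q ^ (n + 1) t`.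
lemma pow_mul_sq_le_deriv_weight_add (n : ℕ) {q t a b : ℝ} (hq : 0 ≤ q)
    (ht : t ^ 2 = 1 - 4 * q) :
    q ^ n * a ^ 2 ≤ 2 * (((n + 1) * q ^ n * t ^ 2 - 2 * q ^ (n + 1)) * a ^ 2
      + q ^ (n + 1) * t * (2 * a * b)) + 72 * q ^ (n + 2) * (a ^ 2 + b ^ 2) := by
  have key : 0 ≤ 2 * n * t ^ 2 * a ^ 2 + (1 - 12 * q + 72 * q ^ 2) * a ^ 2 + 4 * q * t * a * b
      + 72 * q ^ 2 * b ^ 2 := by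
    nlinarith [sq_nonneg (q * b + t * a / 36), mul_nonneg (sq_nonneg (q - 1 / 12)) (sq_nonneg a),
      mul_nonneg (mul_nonneg (Nat.cast_nonneg n : (0:ℝ) ≤ n) (sq_nonneg t)) (sq_nonneg a)]
  linear_combination mul_nonneg (pow_nonneg hq n) key - 2 * q ^ n * a ^ 2 * ht

lemma mul_one_sub_le_min {x : ℝ} (hx : x ∈ Icc (0:ℝ) 1) : x * (1 - x) ≤ min x (1 - x) :=
  le_min (by nlinarith [hx.1]) (by nlinarith [hx.2])

lemma min_le_two_mul_mul_one_sub {x : ℝ} (hx : x ∈ Icc (0:ℝ) 1) :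
    min x (1 - x) ≤ 2 * (x * (1 - x)) := by
  rcases le_total x (1 - x) with h | h
  · rw [min_eq_left h]; nlinarith [hx.1]
  · rw [min_eq_right h]; nlinarith [hx.2]

section
variable {w w' : ℝ → ℝ}

lemma integral_mul_one_sub_pow_mul_sq_le (n : ℕ) (hw : ContinuousOn w (Icc 0 1))
    (hw' : ContinuousOn w' (Icc 0 1)) (hd : ∀ x ∈ Ioo (0:ℝ) 1, HasDerivAt w (w' x) x) :
    ∫ x in (0:ℝ)..1, (x * (1 - x)) ^ n * w x ^ 2 ≤
      72 * ∫ x in (0:ℝ)..1, (x * (1 - x)) ^ (n + 2) * (w x ^ 2 + w' x ^ 2) := by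
  set F' : ℝ → ℝ := fun x => ((n + 1) * (x * (1 - x)) ^ n * (1 - 2 * x) ^ 2
      - 2 * (x * (1 - x)) ^ (n + 1)) * w x ^ 2
    + (x * (1 - x)) ^ (n + 1) * (1 - 2 * x) * (2 * w x * w' x)
  have hF' : ∫ x in (0:ℝ)..1, F' x = 0 := by
    have hderiv : ∀ x ∈ Ioo (0:ℝ) 1,
        HasDerivAt (fun x => (x * (1 - x)) ^ (n + 1) * (1 - 2 * x) * w x ^ 2) (F' x) x := by
      intro x hx
      have hq : HasDerivAt (fun x : ℝ => x * (1 - x)) (1 * (1 - x) + x * (0 - 1)) x :=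
        (hasDerivAt_id' x).fun_mul ((hasDerivAt_const x 1).sub (hasDerivAt_id' x))
      have ht : HasDerivAt (fun x : ℝ => 1 - 2 * x) (0 - 2 * 1) x :=
        (hasDerivAt_const x 1).sub ((hasDerivAt_id' x).const_mul 2)
      refine (((hq.fun_pow (n + 1)).fun_mul ht).fun_mul ((hd x hx).fun_pow 2)).congr_deriv ?_
      simp only [F', Nat.add_sub_cancel]
      push_cast
      ring
    rw [intervalIntegral.integral_eq_sub_of_hasDerivAt_of_le zero_le_one (by fun_prop) hderiv
      (ContinuousOn.intervalIntegrable_of_Icc zero_le_one (by fun_prop))]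
    simp
  calc ∫ x in (0:ℝ)..1, (x * (1 - x)) ^ n * w x ^ 2
      ≤ ∫ x in (0:ℝ)..1,
          (2 * F' x + 72 * ((x * (1 - x)) ^ (n + 2) * (w x ^ 2 + w' x ^ 2))) := by
        refine intervalIntegral.integral_mono_on zero_le_one
          (ContinuousOn.intervalIntegrable_of_Icc zero_le_one (by fun_prop))
          (ContinuousOn.intervalIntegrable_of_Icc zero_le_one (by fun_prop)) fun x hx => ?_
        have := pow_mul_sq_le_deriv_weight_add n (a := w x) (b := w' x) (t := 1 - 2 * x)
          (mul_nonneg hx.1 (sub_nonneg.2 hx.2)) (by ring)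
        simp only [F']
        linarith
    _ = 72 * ∫ x in (0:ℝ)..1, (x * (1 - x)) ^ (n + 2) * (w x ^ 2 + w' x ^ 2) := by
        rw [intervalIntegral.integral_add, intervalIntegral.integral_const_mul,
          intervalIntegral.integral_const_mul, hF']
        · ring
        all_goals exact ContinuousOn.intervalIntegrable_of_Icc zero_le_one (by fun_prop)

lemma integral_min_pow_mul_sq_le (n : ℕ) (hw : ContinuousOn w (Icc 0 1))
    (hw' : ContinuousOn w' (Icc 0 1)) (hd : ∀ x ∈ Ioo (0:ℝ) 1, HasDerivAt w (w' x) x) :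
    ∫ x in (0:ℝ)..1, min x (1 - x) ^ n * w x ^ 2 ≤
      72 * 2 ^ n * ((∫ x in (0:ℝ)..1, min x (1 - x) ^ (n + 2) * w x ^ 2)
        + ∫ x in (0:ℝ)..1, min x (1 - x) ^ (n + 2) * w' x ^ 2) := by
  calc ∫ x in (0:ℝ)..1, min x (1 - x) ^ n * w x ^ 2
      ≤ ∫ x in (0:ℝ)..1, 2 ^ n * ((x * (1 - x)) ^ n * w x ^ 2) := by
        refine intervalIntegral.integral_mono_on zero_le_one
          (ContinuousOn.intervalIntegrable_of_Icc zero_le_one (by fun_prop))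
          (ContinuousOn.intervalIntegrable_of_Icc zero_le_one (by fun_prop)) fun x hx => ?_
        rw [← mul_assoc, ← mul_pow]
        have := min_le_two_mul_mul_one_sub hx
        gcongr
        exact le_min hx.1 (sub_nonneg.2 hx.2)
    _ = 2 ^ n * ∫ x in (0:ℝ)..1, (x * (1 - x)) ^ n * w x ^ 2 :=
        intervalIntegral.integral_const_mul _ _
    _ ≤ 2 ^ n * (72 * ∫ x in (0:ℝ)..1, (x * (1 - x)) ^ (n + 2) * (w x ^ 2 + w' x ^ 2)) := by
        gcongr
        exact integral_mul_one_sub_pow_mul_sq_le n hw hw' hd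
    _ ≤ 2 ^ n * (72 * ∫ x in (0:ℝ)..1, min x (1 - x) ^ (n + 2) * (w x ^ 2 + w' x ^ 2)) := by
        gcongr
        refine intervalIntegral.integral_mono_on zero_le_one
          (ContinuousOn.intervalIntegrable_of_Icc zero_le_one (by fun_prop))
          (ContinuousOn.intervalIntegrable_of_Icc zero_le_one (by fun_prop)) fun x hx => ?_
        have := mul_one_sub_le_min hx
        gcongr
        exact mul_nonneg hx.1 (sub_nonneg.2 hx.2)
    _ = _ := by
        rw [← intervalIntegral.integral_add
          (ContinuousOn.intervalIntegrable_of_Icc zero_le_one (by fun_prop))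
          (ContinuousOn.intervalIntegrable_of_Icc zero_le_one (by fun_prop))]
        simp only [mul_add]
        ring

lemma integral_min_pow_succ_mul_sq_le (n : ℕ) (hw : ContinuousOn w (Icc 0 1)) :
    ∫ x in (0:ℝ)..1, min x (1 - x) ^ (n + 1) * w x ^ 2 ≤
      ∫ x in (0:ℝ)..1, min x (1 - x) ^ n * w x ^ 2 := by
  refine intervalIntegral.integral_mono_on zero_le_one
    (ContinuousOn.intervalIntegrable_of_Icc zero_le_one (by fun_prop))
    (ContinuousOn.intervalIntegrable_of_Icc zero_le_one (by fun_prop)) fun x hx => ?_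
  exact mul_le_mul_of_nonneg_right (pow_le_pow_of_le_one (le_min hx.1 (sub_nonneg.2 hx.2))
    ((min_le_left _ _).trans hx.2) n.le_succ) (sq_nonneg _)

end

theorem ContDiffOn.hasDerivAt_iteratedDerivWithin {𝕜 F : Type*} [NontriviallyNormedField 𝕜]
    [NormedAddCommGroup F] [NormedSpace 𝕜 F] {n : WithTop ℕ∞} {m : ℕ} {f : 𝕜 → F} {s : Set 𝕜}
    {x : 𝕜} (h : ContDiffOn 𝕜 n f s) (hmn : m < n) (hs : UniqueDiffOn 𝕜 s) (hx : s ∈ 𝓝 x) :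
    HasDerivAt (iteratedDerivWithin m f s) (iteratedDerivWithin (m + 1) f s x) x := by
  rw [iteratedDerivWithin_succ]
  exact ((h.differentiableOn_iteratedDerivWithin hmn hs) x
    (mem_of_mem_nhds hx)).hasDerivWithinAt.hasDerivAt hx

-- `I j k` plays the role of `∫ ρ₀ ^ j (∂ₓᵏ v)²`.
lemma sum_range_four_le_of_hardy_steps {I : ℕ → ℕ → ℝ} {K : ℝ} (hK : 1 ≤ K)
    (hI : ∀ j k, 0 ≤ I j k) (hmono : ∀ j k, k ≤ 6 → I (j + 1) k ≤ I j k)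
    (hstep : ∀ j k, j ≤ 4 → k < 6 → I j k ≤ K * (I (j + 2) k + I (j + 2) (k + 1))) :
    ∑ k ∈ Finset.range 4, I 0 k ≤
      7 * K ^ 3 * (I 2 0 + I 2 1 + ∑ k ∈ Finset.Icc 2 6, I k k) := by
  set E := I 2 0 + I 2 1 + ∑ k ∈ Finset.Icc 2 6, I k k
  have hE : E = I 2 0 + I 2 1 + I 2 2 + I 3 3 + I 4 4 + I 5 5 + I 6 6 := by
    simp only [E, Nat.reduceAdd, Nat.reduceLeDiff, Finset.sum_Icc_succ_top, Finset.Icc_self,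
      Finset.sum_singleton]
    ring
  have h23 : I 2 3 ≤ K * (I 3 3 + I 4 4) :=
    (hstep 2 3 (by norm_num) (by norm_num)).trans (by gcongr; exact hmono 3 3 (by norm_num))
  have h45 : I 4 5 ≤ K * (I 5 5 + I 6 6) :=
    (hstep 4 5 (by norm_num) (by norm_num)).trans (by gcongr; exact hmono 5 5 (by norm_num))
  have h24 : I 2 4 ≤ K * (I 4 4 + K * (I 5 5 + I 6 6)) :=
    (hstep 2 4 (by norm_num) (by norm_num)).trans (by gcongr)
  have hK3 : 3 * K + 3 * K ^ 2 + K ^ 3 ≤ 7 * K ^ 3 := by nlinarith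
  calc ∑ k ∈ Finset.range 4, I 0 k
      ≤ K * (I 2 0 + I 2 1) + K * (I 2 1 + I 2 2) + K * (I 2 2 + I 2 3)
          + K * (I 2 3 + I 2 4) := by
        simp only [Finset.sum_range_succ, Finset.sum_range_zero, zero_add]
        gcongr <;> exact hstep 0 _ (by norm_num) (by norm_num)
    _ ≤ K * (I 2 0 + I 2 1) + K * (I 2 1 + I 2 2) + K * (I 2 2 + K * (I 3 3 + I 4 4))
          + K * (K * (I 3 3 + I 4 4) + K * (I 4 4 + K * (I 5 5 + I 6 6))) := by
        gcongr
    _ ≤ K * E + K * E + K * (E + K * E) + K * (K * E + K * (E + K * E)) := by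
        gcongr <;> linarith [hI 2 0, hI 2 1, hI 2 2, hI 3 3, hI 4 4, hI 5 5, hI 6 6]
    _ = (3 * K + 3 * K ^ 2 + K ^ 3) * E := by ring
    _ ≤ 7 * K ^ 3 * E := by
        gcongr
        linarith [hI 2 0, hI 2 1, hI 2 2, hI 3 3, hI 4 4, hI 5 5, hI 6 6]

/-- Lemma 3.1, inequality (3.5): with `ρ₀ x = min x (1-x)`, the higher-order
degenerate-weighted energy functional
`E = ∫ ρ₀²(v² + vₓ²) + Σ_{k=2}^{6} ∫ ρ₀^k (∂ₓ^k v)²`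
controls the unweighted `H³` norm of `v` on `(0,1)`. -/
theorem H3_controlled_by_weighted_energy :
    ∃ C : ℝ, 0 < C ∧
      ∀ v : ℝ → ℝ, ContDiffOn ℝ 6 v (Icc (0:ℝ) 1) →
        (∑ k ∈ Finset.range 4,
            ∫ x in (0:ℝ)..1, (iteratedDerivWithin k v (Icc (0:ℝ) 1) x) ^ 2) ≤
          C * ((∫ x in (0:ℝ)..1, (min x (1 - x)) ^ 2 *
                  ((v x) ^ 2 + (iteratedDerivWithin 1 v (Icc (0:ℝ) 1) x) ^ 2)) +
               ∑ k ∈ Finset.Icc 2 6,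
                 ∫ x in (0:ℝ)..1, (min x (1 - x)) ^ k *
                   (iteratedDerivWithin k v (Icc (0:ℝ) 1) x) ^ 2) := by
  refine ⟨7 * (72 * 2 ^ 4) ^ 3, by positivity, fun v hv => ?_⟩
  set D : ℕ → ℝ → ℝ := fun k => iteratedDerivWithin k v (Icc 0 1)
  have hs : UniqueDiffOn ℝ (Icc (0:ℝ) 1) := uniqueDiffOn_Icc zero_lt_one
  have hcont : ∀ k ≤ 6, ContinuousOn (D k) (Icc 0 1) := fun k hk =>
    hv.continuousOn_iteratedDerivWithin (by exact_mod_cast hk) hs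
  have hderiv : ∀ k < 6, ∀ x ∈ Ioo (0:ℝ) 1, HasDerivAt (D k) (D (k + 1) x) x := fun k hk x hx =>
    hv.hasDerivAt_iteratedDerivWithin (by exact_mod_cast hk) hs (Icc_mem_nhds hx.1 hx.2)
  have hnonneg : ∀ j k, 0 ≤ ∫ x in (0:ℝ)..1, min x (1 - x) ^ j * D k x ^ 2 := fun j k =>
    intervalIntegral.integral_nonneg zero_le_one fun x hx =>
      mul_nonneg (pow_nonneg (le_min hx.1 (sub_nonneg.2 hx.2)) _) (sq_nonneg _)
  have henergy : ∫ x in (0:ℝ)..1, min x (1 - x) ^ 2 * (v x ^ 2 + D 1 x ^ 2) =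
      (∫ x in (0:ℝ)..1, min x (1 - x) ^ 2 * D 0 x ^ 2)
        + ∫ x in (0:ℝ)..1, min x (1 - x) ^ 2 * D 1 x ^ 2 := by
    have := hcont 0 (by norm_num); have := hcont 1 (by norm_num)
    rw [← intervalIntegral.integral_add
      (ContinuousOn.intervalIntegrable_of_Icc zero_le_one (by fun_prop))
      (ContinuousOn.intervalIntegrable_of_Icc zero_le_one (by fun_prop))]
    simp [D, mul_add]
  have hsum := sum_range_four_le_of_hardy_steps (K := 72 * 2 ^ 4) (by norm_num) hnonneg
    (fun j k hk => integral_min_pow_succ_mul_sq_le j (hcont k hk))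
    (fun j k hj hk => (integral_min_pow_mul_sq_le j (hcont k hk.le) (hcont (k + 1) hk)
      (hderiv k hk)).trans (mul_le_mul_of_nonneg_right (by gcongr; norm_num)
        (add_nonneg (hnonneg _ _) (hnonneg _ _))))
  simp only [pow_zero, one_mul] at hsum
  rw [henergy]
  exact hsum
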